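/- Let R be a ring and M an R-module. Then M has strongly FP-injective coresolution dimension at most m if and only if Ext^{i+m}_R(F, M) = 0 for every finitely presented R-module F and every i ≥ 1. -/

import Mathlib

open CategoryTheory

attribute [local instance] HasDerivedCategory.standard
attribute [local instance] CategoryTheory.hasExt_of_hasDerivedCategory
set_option synthInstance.maxHeartbeats 400000

universe u
variable (R : Type u) [Ring R]

/-- Vanishing of `Ext^n`. -/
def extZero (A B : ModuleCat.{u} R) (n : ℕ) : Prop :=
  Subsingleton (Abelian.Ext A B n)

/-- A module is finitely presented. -/
def FinPres (F : ModuleCat.{u} R) : Prop :=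
  ∃ (n : ℕ) (f : (Fin n → R) →ₗ[R] F), Function.Surjective f ∧ (LinearMap.ker f).FG

/-- Strongly FP-injective modules. -/
def StronglyFPInjective (E : ModuleCat.{u} R) : Prop :=
  ∀ F : ModuleCat.{u} R, FinPres R F → ∀ k : ℕ, 1 ≤ k → extZero R F E k

/-- Existence of an exact coresolution `0 → M → E^0 → ⋯ → E^k → 0` of length exactly `k`
with all `E^i` in the class `𝒳`. -/
inductive Cores (𝒳 : ModuleCat.{u} R → Prop) : ModuleCat.{u} R → ℕ → Prop
  | base {M E : ModuleCat.{u} R} (e : M ≅ E) (hE : 𝒳 E) : Cores 𝒳 M 0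
  | step (S : ShortComplex (ModuleCat.{u} R)) (hS : S.ShortExact)
      (hX : 𝒳 S.X₂) {n : ℕ} (h : Cores 𝒳 S.X₃ n) : Cores 𝒳 S.X₁ (n + 1)

/-- Coresolution dimension at most `m`. -/
def coresdimLE (𝒳 : ModuleCat.{u} R → Prop) (M : ModuleCat.{u} R) (m : ℕ) : Prop :=
  ∃ k ≤ m, Cores R 𝒳 M k

/-- Finite coresolution dimension (the class `𝒳^∨`). -/
def coresdimFin (𝒳 : ModuleCat.{u} R → Prop) (M : ModuleCat.{u} R) : Prop :=
  ∃ k, Cores R 𝒳 M k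

/-- Existence of an exact resolution `0 → X_k → ⋯ → X_0 → M → 0` of length exactly `k`. -/
inductive Res (𝒳 : ModuleCat.{u} R → Prop) : ModuleCat.{u} R → ℕ → Prop
  | base {M X : ModuleCat.{u} R} (e : X ≅ M) (hX : 𝒳 X) : Res 𝒳 M 0
  | step (S : ShortComplex (ModuleCat.{u} R)) (hS : S.ShortExact)
      (hX : 𝒳 S.X₂) {n : ℕ} (h : Res 𝒳 S.X₁ n) : Res 𝒳 S.X₃ (n + 1)

/-- Resolution dimension at most `m`. -/
def resdimLE (𝒳 : ModuleCat.{u} R → Prop) (M : ModuleCat.{u} R) (m : ℕ) : Prop :=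
  ∃ k ≤ m, Res R 𝒳 M k

/-- Finite resolution dimension (the class `𝒳^∧`). -/
def resdimFin (𝒳 : ModuleCat.{u} R → Prop) (M : ModuleCat.{u} R) : Prop :=
  ∃ k, Res R 𝒳 M k

/-- Projective dimension at most `m`. -/
def pdLE (M : ModuleCat.{u} R) (m : ℕ) : Prop :=
  resdimLE R (fun P => Projective P) M m

/-- Injective dimension at most `m`. -/
def idLE (M : ModuleCat.{u} R) (m : ℕ) : Prop :=
  coresdimLE R (fun I => Injective I) M m

/-- Strongly FP-injective coresolution dimension at most `m` (the class `SFI^∨_m`). -/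
def SFIdimLE (M : ModuleCat.{u} R) (m : ℕ) : Prop :=
  coresdimLE R (StronglyFPInjective R) M m

/-- Finite strongly FP-injective coresolution dimension (the class `SFI^∨`). -/
def SFIfin (M : ModuleCat.{u} R) : Prop :=
  coresdimFin R (StronglyFPInjective R) M

/-- `N` lies in the right `Ext^1`-orthogonal class `𝒳^⊥1`. -/
def rperp1 (𝒳 : ModuleCat.{u} R → Prop) (N : ModuleCat.{u} R) : Prop :=
  ∀ X, 𝒳 X → extZero R X N 1

/-- `N` lies in the right `Ext`-orthogonal class `𝒳^⊥`. -/
def rperp (𝒳 : ModuleCat.{u} R → Prop) (N : ModuleCat.{u} R) : Prop :=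
  ∀ X, 𝒳 X → ∀ n : ℕ, 1 ≤ n → extZero R X N n

/-- `M` lies in the left `Ext^1`-orthogonal class `⊥1𝒴`. -/
def lperp1 (𝒴 : ModuleCat.{u} R → Prop) (M : ModuleCat.{u} R) : Prop :=
  ∀ Y, 𝒴 Y → extZero R M Y 1

/-- Cotorsion pair. -/
def IsCotorsionPair (𝒳 𝒴 : ModuleCat.{u} R → Prop) : Prop :=
  (∀ M, 𝒳 M ↔ lperp1 R 𝒴 M) ∧ (∀ N, 𝒴 N ↔ rperp1 R 𝒳 N)

/-- Completeness of a pair of classes: every module `M` admits a short exact sequence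
`0 → Y → X → M → 0` with `X ∈ 𝒳`, `Y ∈ 𝒴`. -/
def CompletePair (𝒳 𝒴 : ModuleCat.{u} R → Prop) : Prop :=
  ∀ M : ModuleCat.{u} R, ∃ S : ShortComplex (ModuleCat.{u} R),
    S.ShortExact ∧ 𝒴 S.X₁ ∧ 𝒳 S.X₂ ∧ S.X₃ = M

/-- Hereditary pair: all higher Ext groups between the two classes vanish. -/
def HereditaryPair (𝒳 𝒴 : ModuleCat.{u} R → Prop) : Prop :=
  ∀ X Y, 𝒳 X → 𝒴 Y → ∀ n : ℕ, 1 ≤ n → extZero R X Y n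

/-- A thick class: closed under direct summands and satisfying 2-out-of-3 on
short exact sequences. -/
def Thick (𝒲 : ModuleCat.{u} R → Prop) : Prop :=
  (∀ W A B : ModuleCat.{u} R, 𝒲 W → Nonempty (W ≅ A ⊞ B) → 𝒲 A) ∧
  (∀ S : ShortComplex (ModuleCat.{u} R), S.ShortExact →
    ((𝒲 S.X₁ ∧ 𝒲 S.X₂ → 𝒲 S.X₃) ∧ (𝒲 S.X₁ ∧ 𝒲 S.X₃ → 𝒲 S.X₂) ∧
      (𝒲 S.X₂ ∧ 𝒲 S.X₃ → 𝒲 S.X₁)))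

/-- Projective cotorsion pair. -/
def ProjectiveCotorsionPair (𝒳 𝒲 : ModuleCat.{u} R → Prop) : Prop :=
  IsCotorsionPair R 𝒳 𝒲 ∧ CompletePair R 𝒳 𝒲 ∧ Thick R 𝒲 ∧
    (∀ M, (𝒳 M ∧ 𝒲 M) ↔ Projective M)

/-- An acyclic (exact) complex with projective components. -/
def AcyclicProjectiveComplex (X : CochainComplex (ModuleCat.{u} R) ℤ) : Prop :=
  (∀ i, Projective (X.X i)) ∧ (∀ i, X.ExactAt i)

/-- The complex `X` stays exact after applying `Hom_R(-, L)`. -/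
def HomIntoExact (X : CochainComplex (ModuleCat.{u} R) ℤ) (L : ModuleCat.{u} R) : Prop :=
  ∀ i : ℤ, ∀ φ : X.X i ⟶ L, X.d (i - 1) i ≫ φ = 0 →
    ∃ ψ : X.X (i + 1) ⟶ L, φ = X.d i (i + 1) ≫ ψ

/-- The complex `X` stays exact after applying `Hom_R(L, -)`. -/
def HomFromExact (X : CochainComplex (ModuleCat.{u} R) ℤ) (L : ModuleCat.{u} R) : Prop :=
  ∀ i : ℤ, ∀ φ : L ⟶ X.X i, φ ≫ X.d i (i + 1) = 0 →
    ∃ ψ : L ⟶ X.X (i - 1), φ = ψ ≫ X.d (i - 1) i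

/-- `(𝒫(R), 𝓛)`-Gorenstein projective modules: cycles of acyclic complexes of
projectives which stay exact under `Hom_R(-, L)` for all `L ∈ 𝓛`. -/
def GPrel (𝓛 : ModuleCat.{u} R → Prop) (G : ModuleCat.{u} R) : Prop :=
  ∃ X : CochainComplex (ModuleCat.{u} R) ℤ, AcyclicProjectiveComplex R X ∧
    (∀ L, 𝓛 L → HomIntoExact R X L) ∧
    ∃ i : ℤ, Nonempty (G ≅ ModuleCat.of R (LinearMap.ker (X.d i (i + 1)).hom))

/-- Gorenstein projective modules. -/
def GorensteinProjective (G : ModuleCat.{u} R) : Prop :=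
  GPrel R (fun P => Projective P) G

/-- Gorenstein injective modules. -/
def GorensteinInjective (G : ModuleCat.{u} R) : Prop :=
  ∃ X : CochainComplex (ModuleCat.{u} R) ℤ,
    (∀ i, Injective (X.X i)) ∧ (∀ i, X.ExactAt i) ∧
    (∀ I : ModuleCat.{u} R, Injective I → HomFromExact R X I) ∧
    ∃ i : ℤ, Nonempty (G ≅ ModuleCat.of R (LinearMap.ker (X.d i (i + 1)).hom))

/-- A special `𝒳`-precover of `M`. -/
def SpecialPrecover (𝒳 : ModuleCat.{u} R → Prop) (M : ModuleCat.{u} R) : Prop :=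
  ∃ (G : ModuleCat.{u} R) (g : G ⟶ M), Function.Surjective g ∧ 𝒳 G ∧
    rperp1 R 𝒳 (ModuleCat.of R (LinearMap.ker g.hom))

/-- An `𝒳`-precover of `M`. -/
def Precover (𝒳 : ModuleCat.{u} R → Prop) (M : ModuleCat.{u} R) : Prop :=
  ∃ (G : ModuleCat.{u} R) (g : G ⟶ M), 𝒳 G ∧
    ∀ (G' : ModuleCat.{u} R) (g' : G' ⟶ M), 𝒳 G' → ∃ h : G' ⟶ G, g' = h ≫ g

/-- `spli(R) ≤ m` : every injective has projective dimension at most `m`. -/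
def spliLE (m : ℕ) : Prop := ∀ I : ModuleCat.{u} R, Injective I → pdLE R I m

/-- `silp(R) ≤ m` : every projective has injective dimension at most `m`. -/
def silpLE (m : ℕ) : Prop := ∀ P : ModuleCat.{u} R, Projective P → idLE R P m
/-- Generating relations for the balanced tensor product `I ⊗_R N` of a right module `I`
and a left module `N`. -/
def TensorRelSet (I N : Type u) [AddCommGroup I] [Module Rᵐᵒᵖ I]
    [AddCommGroup N] [Module R N] : Set (FreeAbelianGroup (I × N)) :=
  { x | (∃ i₁ i₂ n, x = FreeAbelianGroup.of (i₁ + i₂, n) - FreeAbelianGroup.of (i₁, n) -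
          FreeAbelianGroup.of (i₂, n)) ∨
        (∃ i n₁ n₂, x = FreeAbelianGroup.of (i, n₁ + n₂) - FreeAbelianGroup.of (i, n₁) -
          FreeAbelianGroup.of (i, n₂)) ∨
        (∃ (i : I) (r : R) (n : N), x = FreeAbelianGroup.of (MulOpposite.op r • i, n) -
          FreeAbelianGroup.of (i, r • n)) }

def TensorRel (I N : Type u) [AddCommGroup I] [Module Rᵐᵒᵖ I]
    [AddCommGroup N] [Module R N] : AddSubgroup (FreeAbelianGroup (I × N)) :=
  AddSubgroup.closure (TensorRelSet R I N)

/-- The balanced tensor product `I ⊗_R N`. -/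
def Tens (I N : Type u) [AddCommGroup I] [Module Rᵐᵒᵖ I]
    [AddCommGroup N] [Module R N] : Type u :=
  FreeAbelianGroup (I × N) ⧸ TensorRel R I N

instance (I N : Type u) [AddCommGroup I] [Module Rᵐᵒᵖ I] [AddCommGroup N] [Module R N] :
    AddCommGroup (Tens R I N) :=
  QuotientAddGroup.Quotient.addCommGroup _

/-- Functoriality of `I ⊗_R -`. -/
noncomputable def rmap (I : Type u) [AddCommGroup I] [Module Rᵐᵒᵖ I]
    {N N' : Type u} [AddCommGroup N] [Module R N] [AddCommGroup N'] [Module R N']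
    (f : N →ₗ[R] N') : Tens R I N →+ Tens R I N' :=
  QuotientAddGroup.map _ _ (FreeAbelianGroup.lift (fun p => FreeAbelianGroup.of (p.1, f p.2)))
    (by
      rw [TensorRel, AddSubgroup.closure_le]
      rintro x (⟨i₁, i₂, nn, rfl⟩ | ⟨i, n₁, n₂, rfl⟩ | ⟨i, r, nn, rfl⟩) <;>
        simp only [SetLike.mem_coe, AddSubgroup.mem_comap, map_sub, FreeAbelianGroup.lift_apply_of]
      · exact AddSubgroup.subset_closure (Or.inl ⟨i₁, i₂, f nn, rfl⟩)
      · exact AddSubgroup.subset_closure (Or.inr (Or.inl ⟨i, f n₁, f n₂, by rw [map_add]⟩))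
      · exact AddSubgroup.subset_closure (Or.inr (Or.inr ⟨i, r, f nn, by rw [map_smul]⟩)))

/-- Functoriality of `- ⊗_R N`. -/
noncomputable def lmap {I J : Type u} [AddCommGroup I] [Module Rᵐᵒᵖ I]
    [AddCommGroup J] [Module Rᵐᵒᵖ J] (g : I →ₗ[Rᵐᵒᵖ] J)
    (N : Type u) [AddCommGroup N] [Module R N] : Tens R I N →+ Tens R J N :=
  QuotientAddGroup.map _ _ (FreeAbelianGroup.lift (fun p => FreeAbelianGroup.of (g p.1, p.2)))
    (by
      rw [TensorRel, AddSubgroup.closure_le]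
      rintro x (⟨i₁, i₂, nn, rfl⟩ | ⟨i, n₁, n₂, rfl⟩ | ⟨i, r, nn, rfl⟩) <;>
        simp only [SetLike.mem_coe, AddSubgroup.mem_comap, map_sub, FreeAbelianGroup.lift_apply_of]
      · exact AddSubgroup.subset_closure (Or.inl ⟨g i₁, g i₂, nn, by rw [map_add]⟩)
      · exact AddSubgroup.subset_closure (Or.inr (Or.inl ⟨g i, n₁, n₂, rfl⟩))
      · exact AddSubgroup.subset_closure (Or.inr (Or.inr ⟨g i, r, nn, by rw [map_smul]⟩)))

/-- Flatness of a left module over a possibly noncommutative ring: the functor `- ⊗_R N`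
preserves injections of right modules. -/
def FlatMod (N : Type u) [AddCommGroup N] [Module R N] : Prop :=
  ∀ (I J : Type u) [AddCommGroup I] [Module Rᵐᵒᵖ I] [AddCommGroup J] [Module Rᵐᵒᵖ J]
    (g : I →ₗ[Rᵐᵒᵖ] J), Function.Injective g → Function.Injective (lmap R g N)

/-- Flat dimension at most `m` (over a possibly noncommutative ring). -/
def fdLE (M : ModuleCat.{u} R) (m : ℕ) : Prop :=
  resdimLE R (fun F => FlatMod R F) M m

/-- Finite flat dimension. -/
def fdFin (M : ModuleCat.{u} R) : Prop :=
  resdimFin R (fun F => FlatMod R F) M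

/-- The complex `X` of left modules stays exact after applying `I ⊗_R -` for the
right module `I`. -/
def TensorExactAgainst (I : Type u) [AddCommGroup I] [Module Rᵐᵒᵖ I]
    (X : CochainComplex (ModuleCat.{u} R) ℤ) : Prop :=
  ∀ i : ℤ, Function.Exact (rmap R I (X.d (i - 1) i).hom) (rmap R I (X.d i (i + 1)).hom)

/-- Gorenstein flat modules: cycles of acyclic complexes of flats which stay exact
under `I ⊗_R -` for all injective right modules `I`. -/
def GorensteinFlat (G : ModuleCat.{u} R) : Prop :=
  ∃ X : CochainComplex (ModuleCat.{u} R) ℤ,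
    (∀ i, FlatMod R (X.X i)) ∧ (∀ i, X.ExactAt i) ∧
    (∀ (I : Type u) [AddCommGroup I] [Module Rᵐᵒᵖ I], Module.Injective Rᵐᵒᵖ I →
      TensorExactAgainst R I X) ∧
    ∃ i : ℤ, Nonempty (G ≅ ModuleCat.of R (LinearMap.ker (X.d i (i + 1)).hom))

/-- A GP-admissible pair of classes of modules. -/
structure GPAdmissible (𝒳 𝒴 : ModuleCat.{u} R → Prop) : Prop where
  isoClosedX : ∀ A B : ModuleCat.{u} R, (A ≅ B) → 𝒳 A → 𝒳 B
  isoClosedY : ∀ A B : ModuleCat.{u} R, (A ≅ B) → 𝒴 A → 𝒴 B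
  ext_vanish : ∀ X Y, 𝒳 X → 𝒴 Y → ∀ n : ℕ, 1 ≤ n → extZero R X Y n
  surj : ∀ A : ModuleCat.{u} R, ∃ (X : ModuleCat.{u} R) (f : X ⟶ A),
    𝒳 X ∧ Function.Surjective f
  coprodX : ∀ A B, 𝒳 A → 𝒳 B → 𝒳 (A ⊞ B)
  coprodY : ∀ A B, 𝒴 A → 𝒴 B → 𝒴 (A ⊞ B)
  extClosedX : ∀ S : ShortComplex (ModuleCat.{u} R), S.ShortExact → 𝒳 S.X₁ → 𝒳 S.X₃ → 𝒳 S.X₂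
  cogen : ∀ X, 𝒳 X → ∃ S : ShortComplex (ModuleCat.{u} R), S.ShortExact ∧ S.X₁ = X ∧
    (𝒳 S.X₂ ∧ 𝒴 S.X₂) ∧ 𝒳 S.X₃

/-! Strongly FP-injective modules are exactly `rperp R (FinPres R)`, and the equivalence holds
for the right `Ext`-orthogonal `rperp R 𝒞` of any class `𝒞`. Along a short exact sequence
`0 → M → E → M' → 0` with `Ext^{≥1}(C, E) = 0`, the long exact sequence gives
`Ext^{n+1}(C, M) = 0` iff `Ext^n(C, M') = 0` for `n ≥ 1`. Reading this from `M'` to `M`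
bounds `Ext` along any coresolution; reading it from `M` to `M'` for an injective `E` shows that
after `m` injective steps the cokernel already lies in `rperp R 𝒞`. -/

open CategoryTheory.Abelian CategoryTheory.Limits

variable {R}

lemma extZero_iff_forall_eq_zero {A B : ModuleCat.{u} R} {n : ℕ} :
    extZero R A B n ↔ ∀ x : Ext A B n, x = 0 :=
  ⟨fun h x => @Subsingleton.elim _ h x 0, fun h => ⟨fun a b => by rw [h a, h b]⟩⟩

lemma extZero_of_injective (F E : ModuleCat.{u} R) [Injective E] {k : ℕ} (hk : 1 ≤ k) :
    extZero R F E k := by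
  obtain ⟨n, rfl⟩ := Nat.exists_eq_add_of_le' hk
  exact Ext.subsingleton_of_injective F E n

lemma extZero_of_iso (A : ModuleCat.{u} R) {B B' : ModuleCat.{u} R} (e : B ≅ B') {n : ℕ}
    (h : extZero R A B n) : extZero R A B' n := by
  rw [extZero_iff_forall_eq_zero] at h ⊢
  intro x
  have hx : x = (x.comp (Ext.mk₀ e.inv) (add_zero n)).comp (Ext.mk₀ e.hom) (add_zero n) := by
    rw [Ext.comp_assoc_of_third_deg_zero, Ext.mk₀_comp_mk₀, e.inv_hom_id, Ext.comp_mk₀_id]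
  rw [hx, h (x.comp (Ext.mk₀ e.inv) (add_zero n)), Ext.zero_comp]

section ShortExact

variable {F : ModuleCat.{u} R} {S : ShortComplex (ModuleCat.{u} R)} {n₀ n₁ : ℕ}

lemma extZero_X₁_of_shortExact (hS : S.ShortExact) (h : n₀ + 1 = n₁)
    (h₃ : extZero R F S.X₃ n₀) (h₂ : extZero R F S.X₂ n₁) : extZero R F S.X₁ n₁ := by
  rw [extZero_iff_forall_eq_zero] at h₃ h₂ ⊢
  intro x
  obtain ⟨x₃, rfl⟩ := Ext.covariant_sequence_exact₁ F hS x (h₂ _) h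
  rw [h₃ x₃, Ext.zero_comp]

lemma extZero_X₃_of_shortExact (hS : S.ShortExact) (h : n₀ + 1 = n₁)
    (h₂ : extZero R F S.X₂ n₀) (h₁ : extZero R F S.X₁ n₁) : extZero R F S.X₃ n₀ := by
  rw [extZero_iff_forall_eq_zero] at h₂ h₁ ⊢
  intro x
  obtain ⟨x₂, rfl⟩ := Ext.covariant_sequence_exact₃ F hS x h (h₁ _)
  rw [h₂ x₂, Ext.zero_comp]

end ShortExact

lemma exists_shortExact_injective (M : ModuleCat.{u} R) :
    ∃ S : ShortComplex (ModuleCat.{u} R), S.ShortExact ∧ S.X₁ = M ∧ Injective S.X₂ :=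
  ⟨ShortComplex.mk (Injective.ι M) (cokernel.π _) (cokernel.condition _),
    ShortComplex.ShortExact.mk' (ShortComplex.exact_of_g_is_cokernel _ (cokernelIsCokernel _))
      inferInstance inferInstance,
    rfl, Injective.injective_under M⟩

variable {𝒞 𝒳 : ModuleCat.{u} R → Prop}

lemma rperp_of_injective (E : ModuleCat.{u} R) [Injective E] : rperp R 𝒞 E :=
  fun F _ _ hk => extZero_of_injective F E hk

lemma Cores.extZero_add (h𝒳 : ∀ E, 𝒳 E → rperp R 𝒞 E) {M : ModuleCat.{u} R} {k : ℕ}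
    (hM : Cores R 𝒳 M k) : ∀ C, 𝒞 C → ∀ i, 1 ≤ i → extZero R C M (i + k) := by
  induction hM with
  | base e hE => exact fun C hC i hi => extZero_of_iso C e.symm (h𝒳 _ hE C hC i hi)
  | step S hS hX _ ih =>
    exact fun C hC i hi =>
      extZero_X₁_of_shortExact hS rfl (ih C hC i hi) (h𝒳 _ hX C hC _ (by omega))

lemma cores_rperp_of_extZero_add :
    ∀ (m : ℕ) (M : ModuleCat.{u} R), (∀ C, 𝒞 C → ∀ i, 1 ≤ i → extZero R C M (i + m)) →
      Cores R (rperp R 𝒞) M m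
  | 0, M, h => Cores.base (Iso.refl M) h
  | m + 1, M, h => by
    obtain ⟨S, hS, rfl, hI⟩ := exists_shortExact_injective M
    refine Cores.step S hS (rperp_of_injective S.X₂) (cores_rperp_of_extZero_add m S.X₃ ?_)
    exact fun C hC i hi => extZero_X₃_of_shortExact hS rfl
      (extZero_of_injective C S.X₂ (by omega)) (h C hC i hi)

theorem coresdimLE_rperp_iff (M : ModuleCat.{u} R) (m : ℕ) :
    coresdimLE R (rperp R 𝒞) M m ↔ ∀ C, 𝒞 C → ∀ i, 1 ≤ i → extZero R C M (i + m) := by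
  refine ⟨fun ⟨k, hk, hM⟩ C hC i hi => ?_,
    fun h => ⟨m, le_rfl, cores_rperp_of_extZero_add m M h⟩⟩
  have := hM.extZero_add (fun _ => id) C hC (i + (m - k)) (by omega)
  rwa [show i + (m - k) + k = i + m by omega] at this

/-- `M` has strongly FP-injective coresolution dimension at most `m` iff
`Ext^{i+m}(F, M) = 0` for every finitely presented `F` and every `i ≥ 1`. -/
theorem stmt_0 (M : ModuleCat.{u} R) (m : ℕ) :
    SFIdimLE R M m ↔
      ∀ F : ModuleCat.{u} R, FinPres R F → ∀ i : ℕ, 1 ≤ i → extZero R F M (i + m) :=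
  coresdimLE_rperp_iff M m
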